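/- arXiv:2206.02383 — 4 statements merged into one kernel-verified Lean document; each statement's English description precedes it below -/
import Mathlib

section
/- Let n ≥ 1 be an integer and L > 0. Define f : [0,1]^n → ℝ by f(x) = L·min(‖x‖, 1/2), where ‖·‖ is the Euclidean norm. Then: (i) f is L-Lipschitz on [0,1]^n; (ii) min_{x ∈ [0,1]^n} f(x) = 0, attained at the origin; and (iii) for every integer m ≥ 1, the average regret of grid search satisfies (1/m^n)·Σ_{g ∈ G_m} f(g) − min_{x∈[0,1]^n} f(x) ≥ L/8, where G_m is the uniform grid of the m^n cube centers. In particular, the average regret of grid search does not converge to 0 as the number of queries grows. -/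
open scoped BigOperators

/-- The unit cube `[0,1]^n` in Euclidean space. -/
def unitCube (n : ℕ) : Set (EuclideanSpace ℝ (Fin n)) :=
  {x | ∀ i, x i ∈ Set.Icc (0 : ℝ) 1}

/-- The grid center of the subcube indexed by `k : Fin n → Fin m`, i.e. the point
with coordinates `(2 kᵢ + 1)/(2m)`. -/
noncomputable def gridCenter (n m : ℕ) (k : Fin n → Fin m) : EuclideanSpace ℝ (Fin n) :=
  (WithLp.equiv 2 (Fin n → ℝ)).symm fun i => (2 * ((k i : ℕ) : ℝ) + 1) / (2 * m)

/-!
Reflecting every index, `kᵢ ↦ m - 1 - kᵢ`, maps the grid to itself and sends each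
coordinate `c` of a grid center to `1 - c`. So the norms of a grid center and of its
reflection add up to at least `1`, hence their values of `min ‖·‖ (1/2)` add up to at
least `1/2`, and summing over the grid gives an average of at least `1/4`, while the
minimum of `f` is `0`.
-/

theorem abs_mul_min_norm_sub_mul_min_norm_le {E : Type*} [SeminormedAddCommGroup E]
    {L : ℝ} (hL : 0 ≤ L) (c : ℝ) (x y : E) :
    |L * min ‖x‖ c - L * min ‖y‖ c| ≤ L * ‖x - y‖ := by
  rw [← mul_sub, abs_mul, abs_of_nonneg hL]
  gcongr
  calc |min ‖x‖ c - min ‖y‖ c| ≤ max |‖x‖ - ‖y‖| |c - c| := abs_min_sub_min_le_max _ _ _ _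
    _ ≤ ‖x - y‖ := by
      rw [sub_self, abs_zero]
      exact max_le (abs_norm_sub_norm_le x y) (norm_nonneg _)

theorem one_half_le_min_add_min {s t : ℝ} (hs : 0 ≤ s) (ht : 0 ≤ t) (hst : 1 ≤ s + t) :
    1 / 2 ≤ min s (1 / 2) + min t (1 / 2) := by
  rcases le_total s (1 / 2) with h | h <;> rcases le_total t (1 / 2) with h' | h' <;>
    simp only [min_eq_left, min_eq_right, h, h'] <;> linarith

theorem Fintype.card_mul_le_two_mul_sum_of_le_add_comp {α : Type*} [Fintype α] (e : α ≃ α)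
    {F : α → ℝ} {c : ℝ} (h : ∀ a, c ≤ F a + F (e a)) :
    Fintype.card α * c ≤ 2 * ∑ a, F a := by
  calc Fintype.card α * c = ∑ _a : α, c := by simp
    _ ≤ ∑ a, (F a + F (e a)) := Finset.sum_le_sum fun a _ => h a
    _ = 2 * ∑ a, F a := by rw [Finset.sum_add_distrib, e.sum_comp]; ring

@[simp]
theorem gridCenter_apply {n m : ℕ} (k : Fin n → Fin m) (i : Fin n) :
    gridCenter n m k i = (2 * ((k i : ℕ) : ℝ) + 1) / (2 * m) := rfl

theorem gridCenter_rev_apply {n m : ℕ} (k : Fin n → Fin m) (i : Fin n) :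
    gridCenter n m (fun j => (k j).rev) i = 1 - gridCenter n m k i := by
  have hk : (k i : ℕ) + 1 ≤ m := (k i).is_lt
  have hm : (0 : ℝ) < m := by exact_mod_cast (k i).pos
  simp only [gridCenter_apply, Fin.val_rev, Nat.cast_sub hk]
  field_simp
  push_cast
  ring

theorem one_le_norm_gridCenter_add_norm_gridCenter_rev {n m : ℕ} (i : Fin n)
    (k : Fin n → Fin m) :
    1 ≤ ‖gridCenter n m k‖ + ‖gridCenter n m (fun j => (k j).rev)‖ := by
  have hx := PiLp.norm_apply_le (gridCenter n m k) i
  have hy := PiLp.norm_apply_le (gridCenter n m (fun j => (k j).rev)) i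
  rw [gridCenter_rev_apply, Real.norm_eq_abs] at hy
  rw [Real.norm_eq_abs] at hx
  linarith [le_abs_self (gridCenter n m k i), le_abs_self (1 - gridCenter n m k i)]

theorem pow_div_four_le_sum_min_norm_gridCenter {n : ℕ} (hn : 1 ≤ n) (m : ℕ) :
    (m : ℝ) ^ n / 4 ≤ ∑ k : Fin n → Fin m, min ‖gridCenter n m k‖ (1 / 2) := by
  have key := Fintype.card_mul_le_two_mul_sum_of_le_add_comp
    (Equiv.piCongrRight fun _ : Fin n => (Fin.revPerm : Equiv.Perm (Fin m)))
    (F := fun k => min ‖gridCenter n m k‖ (1 / 2)) (c := 1 / 2) fun k =>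
      one_half_le_min_add_min (norm_nonneg _) (norm_nonneg _)
        (one_le_norm_gridCenter_add_norm_gridCenter_rev ⟨0, hn⟩ k)
  simp only [Fintype.card_fun, Fintype.card_fin, Nat.cast_pow] at key
  linarith

/-- The function `f(x) = L·min(‖x‖, 1/2)` is `L`-Lipschitz on `[0,1]^n`, attains its
minimum value `0` at the origin, and the average regret of grid search on it is at
least `L/8` for every grid size `m`; hence the average regret of grid search does
not converge to `0`. -/
theorem grid_search_average_regret_lower_bound (n : ℕ) (hn : 1 ≤ n)
    (L : ℝ) (hL : 0 < L) (f : EuclideanSpace ℝ (Fin n) → ℝ)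
    (hfdef : ∀ x, f x = L * min ‖x‖ (1 / 2)) :
    (∀ x ∈ unitCube n, ∀ y ∈ unitCube n, |f x - f y| ≤ L * ‖x - y‖)
      ∧ ((0 : EuclideanSpace ℝ (Fin n)) ∈ unitCube n ∧ f 0 = 0
          ∧ ∀ x ∈ unitCube n, 0 ≤ f x)
      ∧ (∀ m : ℕ, 1 ≤ m →
          L / 8 ≤ (1 / (m : ℝ) ^ n) * ∑ k : Fin n → Fin m, f (gridCenter n m k)
                    - sInf (f '' unitCube n)) := by
  have hf0 : f 0 = 0 := by simp [hfdef]
  have hf_nonneg : ∀ x, 0 ≤ f x := fun x => by rw [hfdef]; positivity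
  have h0 : (0 : EuclideanSpace ℝ (Fin n)) ∈ unitCube n := fun _ => by simp
  have hinf : sInf (f '' unitCube n) = 0 :=
    IsLeast.csInf_eq ⟨⟨0, h0, hf0⟩, by rintro _ ⟨x, -, rfl⟩; exact hf_nonneg x⟩
  refine ⟨fun x _ y _ => ?_, ⟨h0, hf0, fun x _ => hf_nonneg x⟩, fun m hm => ?_⟩
  · rw [hfdef, hfdef]
    exact abs_mul_min_norm_sub_mul_min_norm_le hL.le _ x y
  · have hmn : (0 : ℝ) < (m : ℝ) ^ n := by positivity
    have hgrid := pow_div_four_le_sum_min_norm_gridCenter hn m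
    rw [hinf, sub_zero, Finset.sum_congr rfl fun k _ => hfdef _, ← Finset.mul_sum,
      one_div, ← div_eq_inv_mul, le_div_iff₀ hmn]
    nlinarith
end

section
/- (Edge-vector halving invariant.) Let n ≥ 1 be an integer, θ = 2^{1/n}, and c > 0. Let v ∈ ℝ^n be a vector whose multiset of components equals {c·θ^{−1}, c·θ^{−2}, …, c·θ^{−n}}, and let v′ be obtained from v by replacing its (unique, largest) component of value c·θ^{−1} by c·θ^{−1}/2. Then the multiset of components of v′ equals {c′·θ^{−1}, c′·θ^{−2}, …, c′·θ^{−n}} with c′ = c·θ^{−1}; consequently ‖v′‖ = 2^{−1/n}·‖v‖, where ‖·‖ is the Euclidean norm. -/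
/-!
Since `θⁿ = 2`, halving the top value `c θ⁻¹` yields `c θ⁻⁽ⁿ⁺¹⁾`, so adjoining it to
`{c θ⁻¹, …, c θ⁻ⁿ}` gives the geometric progression `c θ⁻¹, …, c θ⁻⁽ⁿ⁺¹⁾`; read from the
other end, this is `c θ⁻¹` adjoined to `{c' θ⁻¹, …, c' θ⁻ⁿ}`. Cancelling `c θ⁻¹` gives the
new multiset, which is that of `θ⁻¹ • v`, whence the norm.
-/

open Finset

theorem Multiset.cons_map_univ_eq_of_forall_ne {ι α : Type*} [Fintype ι] {f g : ι → α} {j : ι}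
    (hfg : ∀ i, i ≠ j → g i = f i) :
    f j ::ₘ univ.val.map g = g j ::ₘ univ.val.map f := by
  classical
  have hsplit : (univ.val : Multiset ι) = j ::ₘ univ.val.erase j :=
    (Multiset.cons_erase (mem_univ j)).symm
  have hrest : (univ.val.erase j).map g = (univ.val.erase j).map f :=
    Multiset.map_congr rfl fun i hi => hfg i (univ.nodup.mem_erase_iff.mp hi).1
  rw [hsplit, Multiset.map_cons, Multiset.map_cons, hrest, Multiset.cons_swap]

theorem Fin.cons_last_map_univ_eq_cons_zero_map_univ {α : Type*} (f : ℕ → α) (n : ℕ) :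
    f n ::ₘ univ.val.map (fun i : Fin n => f i) =
      f 0 ::ₘ univ.val.map (fun i : Fin n => f (i + 1)) := by
  have hlast : univ.val.map (fun i : Fin (n + 1) => f i) =
      f n ::ₘ univ.val.map (fun i : Fin n => f i) := by
    rw [Fin.univ_castSuccEmb, cons_val, Multiset.map_cons, map_val, Multiset.map_map]
    rfl
  have hzero : univ.val.map (fun i : Fin (n + 1) => f i) =
      f 0 ::ₘ univ.val.map (fun i : Fin n => f (i + 1)) := by
    rw [Fin.univ_succ, cons_val, Multiset.map_cons, map_val, Multiset.map_map]
    rfl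
  rw [← hlast, hzero]

theorem EuclideanSpace.norm_eq_of_map_univ_eq {𝕜 ι : Type*} [RCLike 𝕜] [Fintype ι]
    {x y : EuclideanSpace 𝕜 ι} (h : univ.val.map (fun i => x i) = univ.val.map fun i => y i) :
    ‖x‖ = ‖y‖ := by
  have hsq := congrArg (fun s => (s.map fun a => ‖a‖ ^ 2).sum) h
  simp only [Multiset.map_map, Function.comp_def] at hsq
  simp only [EuclideanSpace.norm_eq, sum_eq_multiset_sum, hsq]

theorem EuclideanSpace.norm_eq_norm_mul_of_map_univ_eq {𝕜 ι : Type*} [RCLike 𝕜] [Fintype ι]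
    {x y : EuclideanSpace 𝕜 ι} (a : 𝕜)
    (h : univ.val.map (fun i => x i) = (univ.val.map fun i => y i).map (a * ·)) :
    ‖x‖ = ‖a‖ * ‖y‖ := by
  rw [← norm_smul]
  exact EuclideanSpace.norm_eq_of_map_univ_eq
    (by simpa [Multiset.map_map, Function.comp_def] using h)

theorem Real.cons_half_map_rpow_eq_cons_map_rpow_succ {θ : ℝ} {n : ℕ} (hθ : 0 < θ)
    (hθn : θ ^ (n : ℝ) = 2) (c : ℝ) :
    (c * θ ^ (-(1 : ℝ)) / 2) ::ₘ
        (univ.val.map fun i : Fin n => c * θ ^ (-(((i : ℕ) : ℝ) + 1))) =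
      (c * θ ^ (-(1 : ℝ))) ::ₘ univ.val.map fun i : Fin n =>
        (c * θ ^ (-(1 : ℝ))) * θ ^ (-(((i : ℕ) : ℝ) + 1)) := by
  have hstep (x : ℝ) : θ ^ (-(x + 1)) = θ ^ (-(1 : ℝ)) * θ ^ (-x) := by
    rw [← Real.rpow_add hθ]
    ring_nf
  convert Fin.cons_last_map_univ_eq_cons_zero_map_univ
    (fun k : ℕ => c * θ ^ (-((k : ℝ) + 1))) n using 2
  · rw [hstep, Real.rpow_neg hθ.le (n : ℝ), hθn]
    ring
  · simp
  · refine Multiset.map_congr rfl fun i _ => ?_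
    rw [Nat.cast_add, Nat.cast_one, hstep (i + 1), mul_assoc]

theorem edge_vector_halving_general (n : ℕ)
    (θ : ℝ) (hθ : θ = (2 : ℝ) ^ ((1 : ℝ) / n)) (c : ℝ)
    (v v' : EuclideanSpace ℝ (Fin n))
    (hv : (Finset.univ.val.map fun i : Fin n => v i)
        = Finset.univ.val.map fun i : Fin n => c * θ ^ (-(((i : ℕ) : ℝ) + 1)))
    (j : Fin n) (hvj : v j = c * θ ^ (-(1 : ℝ)))
    (hv'j : v' j = c * θ ^ (-(1 : ℝ)) / 2)
    (hv'i : ∀ i, i ≠ j → v' i = v i) :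
    ((Finset.univ.val.map fun i : Fin n => v' i)
        = Finset.univ.val.map fun i : Fin n =>
            (c * θ ^ (-(1 : ℝ))) * θ ^ (-(((i : ℕ) : ℝ) + 1)))
      ∧ ‖v'‖ = (2 : ℝ) ^ (-(1 : ℝ) / n) * ‖v‖ := by
  have hθ0 : 0 < θ := hθ ▸ Real.rpow_pos_of_pos two_pos _
  have hθn : θ ^ (n : ℝ) = 2 := by
    rw [hθ, ← Real.rpow_mul zero_le_two, one_div_mul_cancel (Nat.cast_ne_zero.mpr j.pos.ne'),
      Real.rpow_one]
  have hθinv : θ ^ (-(1 : ℝ)) = (2 : ℝ) ^ (-(1 : ℝ) / n) := by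
    rw [hθ, ← Real.rpow_mul zero_le_two]
    ring_nf
  have hcons : (c * θ ^ (-(1 : ℝ))) ::ₘ (univ.val.map fun i => v' i) =
      (c * θ ^ (-(1 : ℝ)) / 2) ::ₘ univ.val.map fun i => v i := by
    rw [← hv'j, ← hvj]
    exact Multiset.cons_map_univ_eq_of_forall_ne hv'i
  have hcomponents := (Multiset.cons_inj_right _).mp
    (hcons.trans (hv ▸ Real.cons_half_map_rpow_eq_cons_map_rpow_succ hθ0 hθn c))
  refine ⟨hcomponents, ?_⟩
  have hscaled : (univ.val.map fun i => v' i) =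
      (univ.val.map fun i => v i).map (θ ^ (-(1 : ℝ)) * ·) := by
    rw [hcomponents, hv, Multiset.map_map]
    exact Multiset.map_congr rfl fun i _ => by simp only [Function.comp_apply]; ring
  rw [EuclideanSpace.norm_eq_norm_mul_of_map_univ_eq _ hscaled,
    Real.norm_of_nonneg (Real.rpow_pos_of_pos hθ0 _).le, hθinv]

/-- Edge-vector halving invariant: if the multiset of components of `v` is
`{c θ⁻¹, c θ⁻², …, c θ⁻ⁿ}` with `θ = 2^{1/n}`, and `v'` is obtained from `v` by
replacing its largest component `c θ⁻¹` (at index `j`) by `c θ⁻¹ / 2`, then the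
multiset of components of `v'` is `{c' θ⁻¹, …, c' θ⁻ⁿ}` with `c' = c θ⁻¹`, and
consequently `‖v'‖ = 2^{-1/n} ‖v‖`. -/
theorem edge_vector_halving (n : ℕ) (hn : 1 ≤ n)
    (θ : ℝ) (hθ : θ = (2 : ℝ) ^ ((1 : ℝ) / n)) (c : ℝ) (hc : 0 < c)
    (v v' : EuclideanSpace ℝ (Fin n))
    (hv : (Finset.univ.val.map fun i : Fin n => v i)
        = Finset.univ.val.map fun i : Fin n => c * θ ^ (-(((i : ℕ) : ℝ) + 1)))
    (j : Fin n) (hvj : v j = c * θ ^ (-(1 : ℝ)))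
    (hv'j : v' j = c * θ ^ (-(1 : ℝ)) / 2)
    (hv'i : ∀ i, i ≠ j → v' i = v i) :
    ((Finset.univ.val.map fun i : Fin n => v' i)
        = Finset.univ.val.map fun i : Fin n =>
            (c * θ ^ (-(1 : ℝ))) * θ ^ (-(((i : ℕ) : ℝ) + 1)))
      ∧ ‖v'‖ = (2 : ℝ) ^ (-(1 : ℝ) / n) * ‖v‖ :=
  edge_vector_halving_general n θ hθ c v v' hv j hvj hv'j hv'i
end

section
/- (Geometric sum along the splitting schedule.) Let n ≥ 2 and T ≥ 1 be integers. Then Σ_{t=1}^{T} 2^{−⌊log₂ t⌋/n} ≤ (2^{(n−1)/n} / (2^{(n−1)/n} − 1)) · T^{(n−1)/n}, where ⌊log₂ t⌋ denotes the integer part of the base-2 logarithm of t. -/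
open Finset

/-! Group `t` into the blocks `[2^k, 2^(k+1))` on which `⌊log₂ t⌋ = k`: block `k` contributes
`2^k · 2^(-k/n) = q^k` with `q = 2^((n-1)/n)`, so the sum is at most the geometric sum
`∑_{k ≤ K} q^k ≤ q/(q-1) · q^K` with `K = ⌊log₂ T⌋`, and `q^K = (2^K)^((n-1)/n) ≤ T^((n-1)/n)`. -/

theorem Nat.sum_Ico_one_pow_comp_log {M : Type*} [AddCommMonoid M] (f : ℕ → M) {b : ℕ}
    (hb : 1 ≤ b) (m : ℕ) :
    ∑ t ∈ Ico 1 (b ^ m), f (Nat.log b t) = ∑ k ∈ range m, (b ^ (k + 1) - b ^ k) • f k := by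
  induction m with
  | zero => simp
  | succ m ih =>
    have hblock : ∀ t ∈ Ico (b ^ m) (b ^ (m + 1)), f (Nat.log b t) = f m := fun t ht => by
      rw [mem_Ico] at ht
      rw [Nat.log_eq_of_pow_le_of_lt_pow ht.1 ht.2]
    rw [← sum_Ico_consecutive _ (Nat.one_le_pow _ _ hb) (Nat.pow_le_pow_right hb m.le_succ), ih,
      sum_congr rfl hblock, sum_const, Nat.card_Ico, sum_range_succ]

theorem Nat.sum_Icc_one_comp_log_le {M : Type*} [AddCommMonoid M] [Preorder M] [AddLeftMono M]
    {f : ℕ → M} (hf : ∀ k, 0 ≤ f k) {b : ℕ} (hb : 1 < b) (T : ℕ) :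
    ∑ t ∈ Icc 1 T, f (Nat.log b t)
      ≤ ∑ k ∈ range (Nat.log b T + 1), (b ^ (k + 1) - b ^ k) • f k := by
  rw [← Nat.sum_Ico_one_pow_comp_log f hb.le]
  refine sum_le_sum_of_subset_of_nonneg (fun t ht => ?_) fun t _ _ => hf _
  rw [mem_Icc] at ht
  exact mem_Ico.2 ⟨ht.1, ht.2.trans_lt (Nat.lt_pow_succ_log_self hb T)⟩

theorem geom_sum_range_succ_le {K : Type*} [Field K] [LinearOrder K] [IsStrictOrderedRing K]
    {q : K} (hq : 1 < q) (m : ℕ) :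
    ∑ k ∈ range (m + 1), q ^ k ≤ q / (q - 1) * q ^ m := by
  have hq1 : 0 < q - 1 := sub_pos.2 hq
  rw [geom_sum_eq hq.ne', div_mul_eq_mul_div, pow_succ']
  gcongr
  exact sub_le_self _ zero_le_one

theorem Real.pow_mul_rpow_neg_div {x : ℝ} (hx : 0 < x) {a : ℝ} (ha : a ≠ 0) (k : ℕ) :
    x ^ k * x ^ (-(k : ℝ) / a) = (x ^ ((a - 1) / a)) ^ k := by
  rw [← Real.rpow_natCast, ← Real.rpow_add hx, ← Real.rpow_mul_natCast hx.le]
  congr 1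
  field_simp
  ring

theorem Real.rpow_pow_log_le {b T : ℕ} (hT : T ≠ 0) {α : ℝ} (hα : 0 ≤ α) :
    ((b : ℝ) ^ α) ^ Nat.log b T ≤ (T : ℝ) ^ α := by
  rw [← Real.rpow_mul_natCast (Nat.cast_nonneg b), mul_comm, Real.rpow_natCast_mul (Nat.cast_nonneg b)]
  gcongr
  exact_mod_cast Nat.pow_log_le_self b hT

/-- Geometric sum along the splitting schedule: for `n ≥ 2` and `T ≥ 1`,
`Σ_{t=1}^T 2^{-⌊log₂ t⌋/n} ≤ (2^{(n-1)/n} / (2^{(n-1)/n} − 1)) · T^{(n-1)/n}`. -/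
theorem splitting_schedule_geometric_sum (n T : ℕ) (hn : 2 ≤ n) (hT : 1 ≤ T) :
    ∑ t ∈ Finset.Icc 1 T, (2 : ℝ) ^ (-((Nat.log 2 t : ℝ)) / n)
      ≤ ((2 : ℝ) ^ (((n : ℝ) - 1) / n) / ((2 : ℝ) ^ (((n : ℝ) - 1) / n) - 1))
          * (T : ℝ) ^ (((n : ℝ) - 1) / n) := by
  have hn' : (2 : ℝ) ≤ n := by exact_mod_cast hn
  have hα : 0 < ((n : ℝ) - 1) / n := by apply div_pos <;> linarith
  set q : ℝ := (2 : ℝ) ^ (((n : ℝ) - 1) / n)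
  have hq : 1 < q := Real.one_lt_rpow one_lt_two hα
  have hblock : ∀ k : ℕ, (2 ^ (k + 1) - 2 ^ k) • (2 : ℝ) ^ (-(k : ℝ) / n) = q ^ k := fun k => by
    rw [pow_succ, Nat.mul_two, Nat.add_sub_cancel, nsmul_eq_mul, Nat.cast_pow, Nat.cast_ofNat,
      Real.pow_mul_rpow_neg_div two_pos (by linarith)]
  calc _ ≤ ∑ k ∈ range (Nat.log 2 T + 1), (2 ^ (k + 1) - 2 ^ k) • (2 : ℝ) ^ (-(k : ℝ) / n) :=
        Nat.sum_Icc_one_comp_log_le (fun k => by positivity) one_lt_two T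
    _ = ∑ k ∈ range (Nat.log 2 T + 1), q ^ k := sum_congr rfl fun k _ => hblock k
    _ ≤ q / (q - 1) * q ^ Nat.log 2 T := geom_sum_range_succ_le hq _
    _ ≤ q / (q - 1) * (T : ℝ) ^ (((n : ℝ) - 1) / n) := by
      have hq1 : 0 < q - 1 := sub_pos.2 hq
      have hpow := Real.rpow_pow_log_le (b := 2) (T := T) (by omega) hα.le
      rw [Nat.cast_ofNat] at hpow
      gcongr
end

section
/- (Minimax lower bound on the average regret.) Let n ≥ 1 and T ≥ 1 be integers and L > 0. Let ω_n denote the Lebesgue measure of the Euclidean unit ball in ℝ^n. Then for any points x_1, …, x_T ∈ [0,1]^n, there exists an L-Lipschitz function f : ℝ^n → ℝ (with respect to the Euclidean norm) such that f(x_t) = 0 for all 1 ≤ t ≤ T and min_{x ∈ [0,1]^n} f(x) ≤ −L·(T·ω_n)^{−1/n}. Consequently, the average regret of these queries satisfies (1/T)·Σ_{t=1}^T f(x_t) − min_{x∈[0,1]^n} f(x) ≥ L·(T·ω_n)^{−1/n}, so no algorithm can beat the rate Ω(L·√n·T^{−1/n}) on all L-Lipschitz objectives; the algorithm's O(L√n·T^{−1/n})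 average regret bound is minimax optimal. -/
/-!
With `ε = (T ω_n)^{-1/n}`, the `T` open balls of radius `ε` around the queries have total volume
at most `T ω_n ε^n ≤ 1 = vol [0,1]^n`. An open set containing a closed set of at least its measure
equals it, and the cube is closed but not open, so the balls miss some point `x_*` of the cube.
The cone `-L·max(ε - ‖x - x_*‖, 0)` is `L`-Lipschitz, vanishes at every query and has minimum
`-Lε` on the cube.
-/

open scoped BigOperators

/-- The Lebesgue volume of the Euclidean unit ball in `ℝ^n`. -/
noncomputable def unitBallVolume (n : ℕ) : ℝ :=
  (MeasureTheory.volume (Metric.ball (0 : EuclideanSpace ℝ (Fin n)) 1)).toReal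

open MeasureTheory Metric Set

theorem IsOpen.eq_of_isClosed_of_subset_of_measure_le {α : Type*} [TopologicalSpace α]
    [MeasurableSpace α] [OpensMeasurableSpace α] {μ : Measure α} [μ.IsOpenPosMeasure]
    {U C : Set α} (hU : IsOpen U) (hC : IsClosed C) (hCU : C ⊆ U) (hμ : μ U ≤ μ C)
    (hC_fin : μ C ≠ ⊤) : U = C := by
  refine (sdiff_eq_empty.1 ?_).antisymm hCU
  apply ((hU.sdiff hC).measure_eq_zero_iff μ).1
  rw [measure_sdiff hCU hC.measurableSet.nullMeasurableSet hC_fin]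
  exact tsub_eq_zero_of_le hμ

/-- A cover of `C` by open balls of no larger total measure would equal `C` and make it clopen. -/
theorem exists_mem_forall_le_dist_of_measure_iUnion_ball_le {α ι : Type*} [PseudoMetricSpace α]
    [PreconnectedSpace α] [MeasurableSpace α] [OpensMeasurableSpace α] {μ : Measure α}
    [μ.IsOpenPosMeasure] {C : Set α} (hC : IsClosed C) (hC_ne : C.Nonempty) (hC_univ : C ≠ univ)
    (hC_fin : μ C ≠ ⊤) (x : ι → α) {ε : ℝ} (hμ : μ (⋃ t, ball (x t) ε) ≤ μ C) :
    ∃ y ∈ C, ∀ t, ε ≤ dist y (x t) := by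
  by_contra! hfar
  have hcover : C ⊆ ⋃ t, ball (x t) ε := fun y hy => mem_iUnion.2 (hfar y hy)
  have hU : IsOpen (⋃ t, ball (x t) ε) := isOpen_iUnion fun _ => isOpen_ball
  have hopen : IsOpen C := hU.eq_of_isClosed_of_subset_of_measure_le hC hcover hμ hC_fin ▸ hU
  rcases isClopen_iff.1 ⟨hC, hopen⟩ with h | h
  · exact hC_ne.ne_empty h
  · exact hC_univ h

theorem Measure.addHaar_iUnion_ball_le {E ι : Type*} [NormedAddCommGroup E] [NormedSpace ℝ E]
    [MeasurableSpace E] [BorelSpace E] [FiniteDimensional ℝ E] [Nontrivial E] (μ : Measure E)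
    [μ.IsAddHaarMeasure] [Fintype ι] (x : ι → E) {r : ℝ} (hr : 0 ≤ r) :
    μ (⋃ t, ball (x t) r) ≤
      Fintype.card ι * ENNReal.ofReal (r ^ Module.finrank ℝ E) * μ (ball 0 1) := by
  calc μ (⋃ t, ball (x t) r) ≤ ∑ t, μ (ball (x t) r) := measure_iUnion_fintype_le μ _
    _ = _ := by simp [Measure.addHaar_ball μ _ hr, mul_assoc]

/-- Also true at `b = 0`, where both sides are `0`. -/
theorem Real.rpow_neg_one_div_pow {b : ℝ} (hb : 0 ≤ b) {n : ℕ} (hn : n ≠ 0) :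
    (b ^ (-1 / (n : ℝ))) ^ n = b⁻¹ := by
  rw [neg_div, one_div, Real.rpow_neg hb, inv_pow, Real.rpow_inv_natCast_pow hb hn]

section unitCube

variable {n : ℕ}

theorem volume_unitCube : volume (unitCube n) = 1 := by
  have h : unitCube n =
      (MeasurableEquiv.toLp 2 (Fin n → ℝ)).symm ⁻¹' pi univ fun _ => Icc 0 1 := by
    ext y
    simp [unitCube, Pi.le_def, forall_and]
  rw [h, (EuclideanSpace.volume_preserving_symm_measurableEquiv_toLp (Fin n)).measure_preimage
    (MeasurableSet.univ_pi fun _ => measurableSet_Icc).nullMeasurableSet, volume_pi_pi]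
  simp

theorem isClosed_unitCube : IsClosed (unitCube n) := by
  rw [unitCube, ofPred_forall]
  exact isClosed_iInter fun i => isClosed_Icc.preimage (PiLp.continuous_apply 2 _ i)

theorem zero_mem_unitCube : (0 : EuclideanSpace ℝ (Fin n)) ∈ unitCube n := fun _ => by simp

theorem unitCube_ne_univ (hn : 0 < n) : unitCube n ≠ univ := by
  intro h
  have := h.symm ▸ mem_univ (WithLp.toLp 2 fun _ : Fin n => (2 : ℝ))
  have := (this ⟨0, hn⟩).2
  norm_num at this

end unitCube

section Witness

variable {α : Type*} [PseudoMetricSpace α] {L ε : ℝ} {y : α}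

noncomputable def regretWitness (L ε : ℝ) (y z : α) : ℝ := -L * max (ε - dist z y) 0

theorem abs_regretWitness_sub_le (hL : 0 ≤ L) (a b : α) :
    |regretWitness L ε y a - regretWitness L ε y b| ≤ L * dist a b := by
  calc |regretWitness L ε y a - regretWitness L ε y b|
      = L * |max (ε - dist a y) 0 - max (ε - dist b y) 0| := by
        rw [regretWitness, regretWitness, ← mul_sub, abs_mul, abs_neg, abs_of_nonneg hL]
    _ ≤ L * |(ε - dist a y) - (ε - dist b y)| :=
        mul_le_mul_of_nonneg_left (abs_max_sub_max_le_abs _ _ _) hL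
    _ ≤ L * dist a b := by
        rw [sub_sub_sub_cancel_left, abs_sub_comm]
        exact mul_le_mul_of_nonneg_left (abs_dist_sub_le a b y) hL

theorem regretWitness_eq_zero {z : α} (h : ε ≤ dist z y) : regretWitness L ε y z = 0 := by
  simp [regretWitness, h]

theorem isLeast_image_regretWitness (hL : 0 ≤ L) (hε : 0 ≤ ε) {s : Set α} (hy : y ∈ s) :
    IsLeast (regretWitness L ε y '' s) (-L * ε) := by
  refine ⟨⟨y, hy, by simp [regretWitness, hε]⟩, ?_⟩
  rintro _ ⟨z, -, rfl⟩
  have : max (ε - dist z y) 0 ≤ ε := max_le (by linarith [dist_nonneg (x := z) (y := y)]) hε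
  simp only [regretWitness, neg_mul, neg_le_neg_iff]
  exact mul_le_mul_of_nonneg_left this hL

end Witness

theorem minimax_average_regret_lower_bound_general (n T : ℕ) (hn : 1 ≤ n)
    (L : ℝ) (hL : 0 < L)
    (x : Fin T → EuclideanSpace ℝ (Fin n)) :
    ∃ f : EuclideanSpace ℝ (Fin n) → ℝ,
      (∀ a b : EuclideanSpace ℝ (Fin n), |f a - f b| ≤ L * ‖a - b‖)
      ∧ (∀ t, f (x t) = 0)
      ∧ sInf (f '' unitCube n) ≤ -L * ((T : ℝ) * unitBallVolume n) ^ (-(1 : ℝ) / n)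
      ∧ L * ((T : ℝ) * unitBallVolume n) ^ (-(1 : ℝ) / n)
          ≤ (1 / (T : ℝ)) * ∑ t, f (x t) - sInf (f '' unitCube n) := by
  have : NeZero n := ⟨by omega⟩
  have hb : 0 ≤ (T : ℝ) * unitBallVolume n := mul_nonneg T.cast_nonneg ENNReal.toReal_nonneg
  set ε := ((T : ℝ) * unitBallVolume n) ^ (-(1 : ℝ) / n)
  have hε : 0 ≤ ε := Real.rpow_nonneg hb _
  have hcover : volume (⋃ t, ball (x t) ε) ≤ volume (unitCube n) := calc
    _ ≤ T * ENNReal.ofReal (ε ^ n) * volume (ball (0 : EuclideanSpace ℝ (Fin n)) 1) := by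
      simpa using Measure.addHaar_iUnion_ball_le volume x hε
    _ = ENNReal.ofReal (T * unitBallVolume n * ε ^ n) := by
      rw [unitBallVolume, ENNReal.ofReal_mul (by positivity), ENNReal.ofReal_mul (by positivity),
        ENNReal.ofReal_natCast, ENNReal.ofReal_toReal measure_ball_lt_top.ne]
      ring
    _ ≤ volume (unitCube n) := by
      rw [Real.rpow_neg_one_div_pow hb (by omega), volume_unitCube]
      exact ENNReal.ofReal_le_one.2 (mul_inv_le_one_of_le₀ le_rfl hb)
  obtain ⟨y, hy, hfar⟩ := exists_mem_forall_le_dist_of_measure_iUnion_ball_le isClosed_unitCube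
    ⟨0, zero_mem_unitCube⟩ (unitCube_ne_univ hn) (by simp [volume_unitCube]) x hcover
  have hzero : ∀ t, regretWitness L ε y (x t) = 0 := fun t =>
    regretWitness_eq_zero (dist_comm y (x t) ▸ hfar t)
  have hmin := (isLeast_image_regretWitness hL.le hε hy).csInf_eq
  refine ⟨regretWitness L ε y, fun a b => ?_, hzero, hmin.le, ?_⟩
  · simpa [dist_eq_norm] using abs_regretWitness_sub_le hL.le a b
  · simp [hzero, hmin]

/-- Minimax lower bound on the average regret: for any `T` query points in `[0,1]^n`
there is an `L`-Lipschitz objective vanishing at all queries whose minimum over the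
cube is at most `−L·(T·ω_n)^{-1/n}`; consequently the average regret of those queries
is at least `L·(T·ω_n)^{-1/n}`. -/
theorem minimax_average_regret_lower_bound (n T : ℕ) (hn : 1 ≤ n) (hT : 1 ≤ T)
    (L : ℝ) (hL : 0 < L)
    (x : Fin T → EuclideanSpace ℝ (Fin n)) (hx : ∀ t, x t ∈ unitCube n) :
    ∃ f : EuclideanSpace ℝ (Fin n) → ℝ,
      (∀ a b : EuclideanSpace ℝ (Fin n), |f a - f b| ≤ L * ‖a - b‖)
      ∧ (∀ t, f (x t) = 0)
      ∧ sInf (f '' unitCube n) ≤ -L * ((T : ℝ) * unitBallVolume n) ^ (-(1 : ℝ) / n)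
      ∧ L * ((T : ℝ) * unitBallVolume n) ^ (-(1 : ℝ) / n)
          ≤ (1 / (T : ℝ)) * ∑ t, f (x t) - sInf (f '' unitCube n) :=
  minimax_average_regret_lower_bound_general n T hn L hL x
end
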